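/- For all integers ℓ ≥ 0 and m ≥ 0, Σ_{q ∈ Q^ℓ : v(q) = m} 2^{u(q)} equals the number of ordered pairs (a, b) of integers with 0 ≤ a < 2^ℓ, 0 ≤ b < 2^ℓ, and a + b = m, where Q = {0,1,2}, and for q = (q_1,…,q_ℓ) ∈ Q^ℓ one defines v(q) = Σ_{i=1}^ℓ q_i·2^{ℓ−i} and u(q) = the number of indices i with q_i = 1. -/

import Mathlib

/-!
Adding two `ℓ`-bit numbers digit by digit, without carrying, gives a digit string over
`{0, 1, 2}` with the same value as their sum. So the pairs `(a, b)` with `a + b = m` are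
partitioned according to this digit-wise sum `q`, which satisfies `v(q) = m`, and the part of
`q` has `2 ^ u(q)` elements: a digit `1` of `q` arises as `0 + 1` or `1 + 0`, while the digits
`0 = 0 + 0` and `2 = 1 + 1` arise in one way only.
-/

open Finset

def digitValue (b : ℕ) {ℓ : ℕ} (d : Fin ℓ → ℕ) : ℕ :=
  ∑ i : Fin ℓ, d i * b ^ (ℓ - 1 - (i : ℕ))

lemma digitValue_add (b : ℕ) {ℓ : ℕ} (d e : Fin ℓ → ℕ) :
    digitValue b (fun i => d i + e i) = digitValue b d + digitValue b e := by
  simp only [digitValue, add_mul, sum_add_distrib]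

def digitEquiv (b ℓ : ℕ) : (Fin ℓ → Fin b) ≃ Fin (b ^ ℓ) :=
  (Equiv.arrowCongr Fin.revPerm (Equiv.refl (Fin b))).trans finFunctionFinEquiv

lemma digitEquiv_apply_val {b ℓ : ℕ} (d : Fin ℓ → Fin b) :
    (digitEquiv b ℓ d : ℕ) = digitValue b (fun i => d i) := by
  change ∑ i : Fin ℓ, (d (Fin.rev i) : ℕ) * b ^ (i : ℕ) = _
  refine Fintype.sum_equiv Fin.revPerm _ _ fun i => ?_
  simp only [Fin.revPerm_apply, Fin.val_rev]
  congr 2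
  omega

theorem card_filter_add_eq_card_digitPairs (b ℓ m : ℕ) :
    #{ab ∈ range (b ^ ℓ) ×ˢ range (b ^ ℓ) | ab.1 + ab.2 = m} =
      #{g : Fin ℓ → Fin b × Fin b | digitValue b (fun i => ((g i).1 + (g i).2 : ℕ)) = m} := by
  let e : (Fin ℓ → Fin b × Fin b) ≃ Fin (b ^ ℓ) × Fin (b ^ ℓ) :=
    (Equiv.arrowProdEquivProdArrow _ _ _).trans (Equiv.prodCongr (digitEquiv b ℓ) (digitEquiv b ℓ))
  have he : ∀ g, e g = (digitEquiv b ℓ fun i => (g i).1, digitEquiv b ℓ fun i => (g i).2) :=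
    fun _ => rfl
  symm
  refine card_bij (fun g _ => ((e g).1.val, (e g).2.val)) ?_ ?_ ?_
  · intro g hg
    simp only [mem_filter, mem_univ, true_and] at hg
    refine mem_filter.2 ⟨mem_product.2 ⟨mem_range.2 (e g).1.is_lt, mem_range.2 (e g).2.is_lt⟩, ?_⟩
    simp only [he, digitEquiv_apply_val, ← digitValue_add, hg]
  · intro g _ g' _ hgg'
    simp only [Prod.mk.injEq] at hgg'
    exact e.injective (Prod.ext (Fin.ext hgg'.1) (Fin.ext hgg'.2))
  · rintro ⟨a, a'⟩ hab
    simp only [mem_filter, mem_product, mem_range] at hab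
    obtain ⟨⟨ha, ha'⟩, hsum⟩ := hab
    refine ⟨e.symm (⟨a, ha⟩, ⟨a', ha'⟩), ?_, by simp⟩
    have hval := congrArg (fun x => (x.1 : ℕ) + x.2) (e.apply_symm_apply (⟨a, ha⟩, ⟨a', ha'⟩))
    simp only [he, digitEquiv_apply_val, ← digitValue_add] at hval
    simpa [hval] using hsum

lemma card_filter_comp_eq_prod {ι α β : Type*} [Fintype ι] [DecidableEq ι] [Fintype α]
    [DecidableEq β] (f : α → β) (q : ι → β) :
    #{g : ι → α | f ∘ g = q} = ∏ i, #{a | f a = q i} := by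
  rw [← Fintype.card_piFinset]
  congr 1
  ext g
  simp [funext_iff]

def addBits (p : Fin 2 × Fin 2) : Fin 3 :=
  ⟨p.1 + p.2, by omega⟩

lemma card_addBits_eq (c : Fin 3) : #{p | addBits p = c} = if c = 1 then 2 else 1 := by
  revert c
  decide

lemma card_addBits_comp_eq {ℓ : ℕ} (q : Fin ℓ → Fin 3) :
    #{g | addBits ∘ g = q} = 2 ^ #{i | q i = 1} := by
  rw [card_filter_comp_eq_prod]
  simp only [card_addBits_eq, prod_ite, prod_const, one_pow, mul_one]

/-- `Σ_{q ∈ Q^ℓ : v(q) = m} 2^(u(q))` equals the number of ordered pairs `(a, b)` of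
integers with `0 ≤ a < 2^ℓ`, `0 ≤ b < 2^ℓ` and `a + b = m`. -/
theorem stmt4 (ℓ m : ℕ) :
    ∑ q ∈ Finset.univ.filter
        (fun q : Fin ℓ → Fin 3 => ∑ i : Fin ℓ, (q i : ℕ) * 2 ^ (ℓ - 1 - (i : ℕ)) = m),
      2 ^ (Finset.univ.filter fun i => q i = 1).card =
    ((Finset.range (2 ^ ℓ) ×ˢ Finset.range (2 ^ ℓ)).filter fun ab => ab.1 + ab.2 = m).card := by
  set Qm := univ.filter fun q : Fin ℓ → Fin 3 => digitValue 2 (fun i => (q i : ℕ)) = m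
  rw [card_filter_add_eq_card_digitPairs, card_eq_sum_card_fiberwise (f := (addBits ∘ ·)) (t := Qm)
    fun g hg => by simpa [Qm, addBits] using hg]
  refine sum_congr rfl fun q hq => ?_
  rw [← card_addBits_comp_eq, filter_filter]
  congr 1
  refine filter_congr fun g _ => (and_iff_right_of_imp fun hg => ?_).symm
  simpa [Qm, addBits, ← hg] using hq
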